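/- arXiv:1407.6822 — 3 statements merged into one kernel-verified Lean document; each statement's English description precedes it below -/
import Mathlib

section
/- In two variables, the sequence R → P_r → (P_{r-1})^2 → P_{r-2} → 0 given by the inclusion of constants, the vector rot (rot q = (∂q/∂y, −∂q/∂x)), and the divergence is exact. -/
/-! The termwise antiderivative `antideriv i`, sending `X^m` to `X^(m + eᵢ) / (mᵢ + 1)`, is a right
inverse of `pderiv i` that commutes with `pderiv j` for `j ≠ i`; it raises degrees by one while
`pderiv i` lowers them by one. Hence `div (∫ q dx, 0) = q`, and a divergence-free `v` equals
`rot p` for `p = ∫ v₀ dy - ∫ w dx`, where `w = v₁ - ∫ ∂_y v₁ dy` is the `y`-independent part of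
`v₁`. In characteristic zero a polynomial all of whose partial derivatives vanish is constant,
since `coeff m (∂ᵢ p)` is `(mᵢ + 1)` times the coefficient of `X^(m + eᵢ)` in `p`. -/

open MvPolynomial

/-- `degLE n p` means `p ∈ P_n`, with the convention `P_n = {0}` for `n < 0`. -/
def degLE (n : ℤ) (p : MvPolynomial (Fin 2) ℝ) : Prop :=
  if 0 ≤ n then p.totalDegree ≤ n.toNat else p = 0

/-- The vector rot of a scalar: `rot q = (∂q/∂y, −∂q/∂x)`. -/
noncomputable def vrot (q : MvPolynomial (Fin 2) ℝ) : Fin 2 → MvPolynomial (Fin 2) ℝ :=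
  ![pderiv 1 q, -pderiv 0 q]

section Antideriv

variable {σ K : Type*} [Field K]

noncomputable def antideriv (i : σ) : MvPolynomial σ K →ₗ[K] MvPolynomial σ K :=
  (basisMonomials σ K).constr K fun m => monomial (m + Finsupp.single i 1) ((m i + 1 : K)⁻¹)

theorem antideriv_monomial (i : σ) (m : σ →₀ ℕ) (a : K) :
    antideriv i (monomial m a) = monomial (m + Finsupp.single i 1) (a / (m i + 1)) := by
  have hbasis : monomial m a = a • basisMonomials σ K m := by
    rw [coe_basisMonomials, smul_monomial, smul_eq_mul, mul_one]
  rw [hbasis, map_smul, antideriv, Module.Basis.constr_basis, smul_monomial, smul_eq_mul,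
    div_eq_mul_inv]

theorem exists_eq_add_single_of_mem_support_antideriv {i : σ} {p : MvPolynomial σ K}
    {m : σ →₀ ℕ} (hm : m ∈ (antideriv i p).support) :
    ∃ m' ∈ p.support, m = m' + Finsupp.single i 1 := by
  classical
  rw [p.as_sum] at hm
  simp only [map_sum, antideriv_monomial] at hm
  obtain ⟨m', hm', hmm'⟩ := Finset.mem_biUnion.1 (support_sum hm)
  exact ⟨m', hm', Finset.mem_singleton.1 (support_monomial_subset hmm')⟩

theorem pderiv_antideriv_of_ne {i j : σ} (hij : j ≠ i) (p : MvPolynomial σ K) :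
    pderiv j (antideriv i p) = antideriv i (pderiv j p) := by
  induction p using induction_on' with
  | monomial m a =>
    classical
    have hexp : m + Finsupp.single i 1 - Finsupp.single j 1
        = m - Finsupp.single j 1 + Finsupp.single i 1 := by
      ext k
      simp only [Finsupp.add_apply, Finsupp.tsub_apply, Finsupp.single_apply]
      split_ifs <;> grind
    rw [antideriv_monomial, pderiv_monomial, pderiv_monomial, antideriv_monomial, hexp]
    simp [hij, hij.symm, div_mul_eq_mul_div]
  | add p q hp hq => rw [map_add, map_add, map_add, map_add, hp, hq]

theorem pderiv_antideriv [CharZero K] (i : σ) (p : MvPolynomial σ K) :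
    pderiv i (antideriv i p) = p := by
  induction p using induction_on' with
  | monomial m a =>
    rw [antideriv_monomial, pderiv_monomial, add_tsub_cancel_right]
    congr 1
    simp only [Finsupp.add_apply, Finsupp.single_eq_same, Nat.cast_add, Nat.cast_one]
    field_simp
  | add p q hp hq => rw [map_add, map_add, hp, hq]

end Antideriv

theorem pderiv_pderiv_comm {σ R : Type*} [CommRing R] (i j : σ) (p : MvPolynomial σ R) :
    pderiv i (pderiv j p) = pderiv j (pderiv i p) := by
  classical
  have hcomm : ⁅pderiv i, pderiv j⁆ = (0 : Derivation R (MvPolynomial σ R) (MvPolynomial σ R)) :=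
    derivation_ext fun k => by rw [Derivation.commutator_apply]; simp [Pi.single_apply, apply_ite]
  rw [← sub_eq_zero, ← Derivation.commutator_apply, hcomm, Derivation.zero_apply]

theorem eq_C_of_forall_pderiv_eq_zero {σ R : Type*} [CommSemiring R] [NoZeroDivisors R]
    [CharZero R] {p : MvPolynomial σ R} (h : ∀ i, pderiv i p = 0) : p = C (coeff 0 p) := by
  classical
  ext m
  rw [coeff_C]
  split_ifs with hm
  · rw [hm]
  · obtain ⟨i, hi⟩ : ∃ i, m i ≠ 0 := by
      by_contra! hm'
      exact hm (Finsupp.ext fun i => (hm' i).symm)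
    have hle : Finsupp.single i 1 ≤ m := Finsupp.single_le_iff.2 (Nat.one_le_iff_ne_zero.2 hi)
    have hcoeff := coeff_pderiv (i := i) p (m - Finsupp.single i 1)
    rw [h i, coeff_zero, tsub_add_cancel_of_le hle] at hcoeff
    exact (mul_eq_zero.1 hcoeff.symm).resolve_right (Nat.cast_add_one_ne_zero _)

noncomputable def vdiv (v : Fin 2 → MvPolynomial (Fin 2) ℝ) : MvPolynomial (Fin 2) ℝ :=
  pderiv 0 (v 0) + pderiv 1 (v 1)

theorem vrot_eq_zero_iff {p : MvPolynomial (Fin 2) ℝ} : vrot p = 0 ↔ ∃ c : ℝ, p = C c := by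
  constructor
  · intro h
    have h1 : pderiv 1 p = 0 := congrFun h 0
    have h0 : pderiv 0 p = 0 := neg_eq_zero.1 (congrFun h 1)
    exact ⟨_, eq_C_of_forall_pderiv_eq_zero (Fin.forall_fin_two.2 ⟨h0, h1⟩)⟩
  · rintro ⟨c, rfl⟩
    ext i : 1
    fin_cases i <;> simp [vrot]

theorem vdiv_vrot (p : MvPolynomial (Fin 2) ℝ) : vdiv (vrot p) = 0 := by
  simp only [vdiv, vrot, Matrix.cons_val_zero, Matrix.cons_val_one, map_neg,
    pderiv_pderiv_comm (0 : Fin 2) 1, add_neg_cancel]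

theorem degLE_iff_forall_mem_support {n : ℤ} {p : MvPolynomial (Fin 2) ℝ} :
    degLE n p ↔ ∀ m ∈ p.support, (m.degree : ℤ) ≤ n := by
  unfold degLE
  split_ifs with hn
  · rw [totalDegree, Finset.sup_le_iff]
    exact forall₂_congr fun m _ => Int.le_toNat hn
  · rw [← support_eq_empty, Finset.eq_empty_iff_forall_notMem]
    exact forall_congr' fun m =>
      ⟨fun hm hm' => absurd hm' hm, fun hm hm' => by have := hm hm'; omega⟩

theorem degLE_natCast_iff {n : ℕ} {p : MvPolynomial (Fin 2) ℝ} :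
    degLE n p ↔ p.totalDegree ≤ n := by
  simp [degLE]

theorem degLE_zero (n : ℤ) : degLE n 0 :=
  degLE_iff_forall_mem_support.2 fun m hm => by simp at hm

namespace degLE

variable {n : ℤ} {p q : MvPolynomial (Fin 2) ℝ}

theorem sub (hp : degLE n p) (hq : degLE n q) : degLE n (p - q) := by
  classical
  rw [degLE_iff_forall_mem_support] at *
  intro m hm
  rcases Finset.mem_union.1 (support_sub _ p q hm) with hm | hm
  exacts [hp m hm, hq m hm]

theorem pderiv (hp : degLE n p) (i : Fin 2) : degLE (n - 1) (MvPolynomial.pderiv i p) := by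
  rw [degLE_iff_forall_mem_support] at *
  intro m hm
  have hm' : m + Finsupp.single i 1 ∈ p.support := by
    rw [mem_support_iff, coeff_pderiv] at hm
    exact mem_support_iff.2 (left_ne_zero_of_mul hm)
  have hdeg := hp _ hm'
  rw [map_add, Finsupp.degree_single] at hdeg
  omega

theorem antideriv (hp : degLE (n - 1) p) (i : Fin 2) : degLE n (_root_.antideriv i p) := by
  rw [degLE_iff_forall_mem_support] at *
  intro m hm
  obtain ⟨m', hm', rfl⟩ := exists_eq_add_single_of_mem_support_antideriv hm
  have hdeg := hp m' hm'
  rw [map_add, Finsupp.degree_single]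
  omega

end degLE

theorem exists_degLE_vrot_eq_of_vdiv_eq_zero {n : ℤ} {v : Fin 2 → MvPolynomial (Fin 2) ℝ}
    (hv : ∀ i, degLE (n - 1) (v i)) (hdiv : vdiv v = 0) :
    ∃ p, degLE n p ∧ v = vrot p := by
  set w := v 1 - antideriv 1 (pderiv 1 (v 1))
  have hw : pderiv 1 w = 0 := by rw [map_sub, pderiv_antideriv, sub_self]
  have hv0 : pderiv 0 (v 0) = -pderiv 1 (v 1) := eq_neg_of_add_eq_zero_left hdiv
  refine ⟨antideriv 1 (v 0) - antideriv 0 w, ((hv 0).antideriv 1).sub ?_, ?_⟩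
  · exact ((hv 1).sub (((hv 1).pderiv 1).antideriv 1)).antideriv 0
  · ext i : 1
    fin_cases i
    · simp [vrot, pderiv_antideriv, pderiv_antideriv_of_ne, hw]
    · simp [vrot, pderiv_antideriv, pderiv_antideriv_of_ne, hv0, w]

theorem exists_degLE_vdiv_eq {n : ℤ} {q : MvPolynomial (Fin 2) ℝ} (hq : degLE (n - 1) q) :
    ∃ v : Fin 2 → MvPolynomial (Fin 2) ℝ, (∀ i, degLE n (v i)) ∧ vdiv v = q :=
  ⟨![antideriv 0 q, 0], Fin.forall_fin_two.2 ⟨hq.antideriv 0, degLE_zero n⟩,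
    by simp [vdiv, pderiv_antideriv]⟩

/-- Exactness of `ℝ → P_r → (P_{r-1})² → P_{r-2} → 0` (inclusion of constants, vector rot
`rot q = (∂q/∂y, −∂q/∂x)`, divergence) in two variables. -/
theorem rot_div_exact_2d (r : ℕ) :
    (∀ p : MvPolynomial (Fin 2) ℝ, p.totalDegree ≤ r →
      (vrot p = 0 ↔ ∃ c : ℝ, p = C c)) ∧
    (∀ v : Fin 2 → MvPolynomial (Fin 2) ℝ, (∀ i, degLE ((r : ℤ) - 1) (v i)) →
      (pderiv 0 (v 0) + pderiv 1 (v 1) = 0 ↔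
        ∃ p : MvPolynomial (Fin 2) ℝ, p.totalDegree ≤ r ∧ v = vrot p)) ∧
    (∀ q : MvPolynomial (Fin 2) ℝ, degLE ((r : ℤ) - 2) q →
      ∃ v : Fin 2 → MvPolynomial (Fin 2) ℝ, (∀ i, degLE ((r : ℤ) - 1) (v i)) ∧
        pderiv 0 (v 0) + pderiv 1 (v 1) = q) := by
  refine ⟨fun p _ => vrot_eq_zero_iff, fun v hv => ⟨fun hdiv => ?_, ?_⟩, fun q hq => ?_⟩
  · obtain ⟨p, hp, rfl⟩ := exists_degLE_vrot_eq_of_vdiv_eq_zero hv hdiv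
    exact ⟨p, degLE_natCast_iff.1 hp, rfl⟩
  · rintro ⟨p, -, rfl⟩
    exact vdiv_vrot p
  · rw [show (r : ℤ) - 2 = r - 1 - 1 by ring] at hq
    exact exists_degLE_vdiv_eq hq
end

section
/- In three variables, a vector polynomial v ∈ (P_s)^3 satisfies div v = 0 if and only if v = curl w for some w ∈ (P_{s+1})^3. -/
/-!
Let `∫_j` be the antiderivative in `X_j` that vanishes on `X_j = 0`, so `∂_j ∫_j = id`,
`∂_i ∫_j = ∫_j ∂_i` for `i ≠ j`, and `p - ∫_j ∂_j p` is the restriction of `p` to `X_j = 0`.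
If `div v = 0`, then `w = (∫_z v₁ - ∫_y (v₂|_{z=0}), -∫_z v₀, 0)` has `curl w = v`: the first two
components are immediate, and the third is `∫_z (-∂_x v₀ - ∂_y v₁) + v₂|_{z=0} = ∫_z ∂_z v₂ + v₂|_{z=0}`.
Each `∫_j` raises the total degree by at most one and restriction does not raise it.
Conversely `div ∘ curl = 0` because partial derivatives commute.
-/

open MvPolynomial

noncomputable def curl3 (v : Fin 3 → MvPolynomial (Fin 3) ℝ) : Fin 3 → MvPolynomial (Fin 3) ℝ :=
  ![pderiv 1 (v 2) - pderiv 2 (v 1),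
    pderiv 2 (v 0) - pderiv 0 (v 2),
    pderiv 0 (v 1) - pderiv 1 (v 0)]

namespace MvPolynomial

theorem totalDegree_linearMap_le {σ τ R : Type*} [CommSemiring R]
    {L : MvPolynomial σ R →ₗ[R] MvPolynomial τ R} {k : ℕ}
    (hL : ∀ a, (L (monomial a 1)).totalDegree ≤ a.degree + k) (p : MvPolynomial σ R) :
    (L p).totalDegree ≤ p.totalDegree + k := by
  conv_lhs => rw [p.as_sum, map_sum]
  refine totalDegree_finsetSum_le fun a ha => ?_
  rw [← mul_one (coeff a p), ← smul_eq_mul, ← smul_monomial, map_smul]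
  exact (totalDegree_smul_le _ _).trans <|
    (hL a).trans <| Nat.add_le_add_right (le_totalDegree ha) k

theorem pderiv_comm {σ R : Type*} [CommRing R] (i j : σ) (p : MvPolynomial σ R) :
    pderiv i (pderiv j p) = pderiv j (pderiv i p) := by
  classical
  have hcomm : ⁅pderiv i, pderiv j⁆ = (0 : Derivation R (MvPolynomial σ R) (MvPolynomial σ R)) :=
    derivation_ext fun k => by
      rw [Derivation.commutator_apply, pderiv_X, pderiv_X]
      simp only [Pi.single_apply]
      split_ifs <;> simp
  have := congr($hcomm p)
  rw [Derivation.commutator_apply] at this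
  exact sub_eq_zero.mp this

section Integral

variable {σ K : Type*} [Field K]

noncomputable def pintegral (j : σ) : MvPolynomial σ K →ₗ[K] MvPolynomial σ K :=
  (basisMonomials σ K).constr K fun a => monomial (a + Finsupp.single j 1) (a j + 1 : K)⁻¹

theorem pintegral_monomial (j : σ) (a : σ →₀ ℕ) (c : K) :
    pintegral j (monomial a c) = monomial (a + Finsupp.single j 1) (c / (a j + 1)) := by
  have h := (basisMonomials σ K).constr_basis K
    (fun a => monomial (a + Finsupp.single j 1) (a j + 1 : K)⁻¹) a
  rw [coe_basisMonomials] at h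
  rw [← mul_one c, ← smul_eq_mul, ← smul_monomial, map_smul, pintegral, h, smul_monomial,
    smul_eq_mul, smul_eq_mul, mul_one, div_eq_mul_inv]

theorem totalDegree_pintegral_le (j : σ) (p : MvPolynomial σ K) :
    (pintegral j p).totalDegree ≤ p.totalDegree + 1 := by
  refine totalDegree_linearMap_le (fun a => ?_) p
  rw [pintegral_monomial]
  refine (totalDegree_monomial_le _ _).trans_eq ?_
  show Finsupp.degree (a + Finsupp.single j 1) = _
  rw [map_add, Finsupp.degree_single]

theorem pderiv_pintegral_of_ne {i j : σ} (h : i ≠ j) (p : MvPolynomial σ K) :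
    pderiv i (pintegral j p) = pintegral j (pderiv i p) := by
  classical
  induction p using MvPolynomial.induction_on' with
  | monomial a c =>
    have hexp : a + Finsupp.single j 1 - Finsupp.single i 1 =
        a - Finsupp.single i 1 + Finsupp.single j 1 := by
      ext k
      simp only [Finsupp.coe_tsub, Finsupp.coe_add, Pi.sub_apply, Pi.add_apply,
        Finsupp.single_apply]
      split_ifs with hj hi
      · exact absurd (hi.trans hj.symm) h
      all_goals omega
    simp only [pintegral_monomial, pderiv_monomial, hexp, Finsupp.add_apply, Finsupp.tsub_apply,
      Finsupp.single_eq_of_ne h, Finsupp.single_eq_of_ne h.symm, add_zero, tsub_zero]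
    ring_nf
  | add p q hp hq => rw [map_add, map_add, hp, hq, map_add, map_add]

variable [CharZero K]

theorem pderiv_pintegral_self (j : σ) (p : MvPolynomial σ K) :
    pderiv j (pintegral j p) = p := by
  induction p using MvPolynomial.induction_on' with
  | monomial a c =>
    rw [pintegral_monomial, pderiv_monomial, add_tsub_cancel_right, Finsupp.add_apply,
      Finsupp.single_eq_same, Nat.cast_add, Nat.cast_one,
      div_mul_cancel₀ _ (Nat.cast_add_one_ne_zero _)]
  | add p q hp hq => rw [map_add, map_add, hp, hq]

theorem pintegral_pderiv_monomial (j : σ) (a : σ →₀ ℕ) (c : K) :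
    pintegral j (pderiv j (monomial a c)) = if a j = 0 then 0 else monomial a c := by
  split_ifs with h
  · simp [h]
  · rw [pderiv_monomial, pintegral_monomial, tsub_add_cancel_of_le, Finsupp.tsub_apply,
      Finsupp.single_eq_same, Nat.cast_sub (by omega)]
    · rw [Nat.cast_one, sub_add_cancel, mul_div_cancel_right₀ _ (Nat.cast_ne_zero.mpr h)]
    · exact Finsupp.single_le_iff.mpr (Nat.one_le_iff_ne_zero.mpr h)

theorem totalDegree_sub_pintegral_pderiv_le (j : σ) (p : MvPolynomial σ K) :
    (p - pintegral j (pderiv j p)).totalDegree ≤ p.totalDegree := by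
  refine totalDegree_linearMap_le (k := 0)
    (L := LinearMap.id - pintegral j ∘ₗ (pderiv j).toLinearMap) (fun a => ?_) p
  simp only [LinearMap.sub_apply, LinearMap.id_apply, LinearMap.comp_apply,
    Derivation.coeFn_coe, pintegral_pderiv_monomial]
  split_ifs
  · rw [sub_zero]
    exact totalDegree_monomial_le a 1
  · simp

end Integral

end MvPolynomial

theorem div_curl3 (w : Fin 3 → MvPolynomial (Fin 3) ℝ) :
    pderiv 0 (curl3 w 0) + pderiv 1 (curl3 w 1) + pderiv 2 (curl3 w 2) = 0 := by
  simp only [curl3, Matrix.cons_val_zero, Matrix.cons_val_one, Matrix.cons_val_two,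
    Matrix.tail_cons, Matrix.head_cons, map_sub]
  rw [pderiv_comm 0 1, pderiv_comm 0 2, pderiv_comm 1 2]
  ring

noncomputable def curlPotential (v : Fin 3 → MvPolynomial (Fin 3) ℝ) :
    Fin 3 → MvPolynomial (Fin 3) ℝ :=
  ![pintegral 2 (v 1) - pintegral 1 (v 2 - pintegral 2 (pderiv 2 (v 2))), -pintegral 2 (v 0), 0]

theorem totalDegree_curlPotential_le {s : ℕ} {v : Fin 3 → MvPolynomial (Fin 3) ℝ}
    (hv : ∀ i, (v i).totalDegree ≤ s) (i : Fin 3) : (curlPotential v i).totalDegree ≤ s + 1 := by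
  have hint (j : Fin 3) {p : MvPolynomial (Fin 3) ℝ} (hp : p.totalDegree ≤ s) :
      (pintegral j p).totalDegree ≤ s + 1 :=
    (totalDegree_pintegral_le j p).trans (Nat.add_le_add_right hp 1)
  fin_cases i
  · exact (totalDegree_sub _ _).trans <|
      max_le (hint 2 (hv 1)) (hint 1 ((totalDegree_sub_pintegral_pderiv_le 2 (v 2)).trans (hv 2)))
  · simpa [curlPotential, totalDegree_neg] using hint 2 (hv 0)
  · simp [curlPotential]

theorem curl3_curlPotential {v : Fin 3 → MvPolynomial (Fin 3) ℝ}
    (hdiv : pderiv 0 (v 0) + pderiv 1 (v 1) + pderiv 2 (v 2) = 0) :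
    curl3 (curlPotential v) = v := by
  ext1 i
  fin_cases i
  · simp [curl3, curlPotential, pderiv_pintegral_self]
  · simp [curl3, curlPotential, pderiv_pintegral_self, pderiv_pintegral_of_ne]
  · have hint := congr(pintegral 2 $hdiv)
    rw [map_add, map_add, map_zero] at hint
    simp only [curl3, curlPotential, Fin.isValue, Matrix.cons_val, Matrix.cons_val_one,
      Matrix.cons_val_zero, Fin.reduceFinMk, map_neg, map_sub, ne_eq, Fin.reduceEq,
      not_false_eq_true, pderiv_pintegral_of_ne, pderiv_pintegral_self]
    linear_combination -hint

/-- In three variables, a vector polynomial `v ∈ (P_s)³` satisfies `div v = 0`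
if and only if `v = curl w` for some `w ∈ (P_{s+1})³`. -/
theorem div_eq_zero_iff_curl (s : ℕ) (v : Fin 3 → MvPolynomial (Fin 3) ℝ)
    (hv : ∀ i, (v i).totalDegree ≤ s) :
    pderiv 0 (v 0) + pderiv 1 (v 1) + pderiv 2 (v 2) = 0 ↔
      ∃ w : Fin 3 → MvPolynomial (Fin 3) ℝ, (∀ i, (w i).totalDegree ≤ s + 1) ∧ v = curl3 w :=
  ⟨fun hdiv => ⟨curlPotential v, totalDegree_curlPotential_le hv, (curl3_curlPotential hdiv).symm⟩,
    by rintro ⟨w, -, rfl⟩; exact div_curl3 w⟩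
end

section
/- If v is a vector field on a simply connected bounded polygon E with div v ∈ P_{k-1}(E), such that ∫_e (v·n) p_k ds = 0 for every edge e of E and every p_k ∈ P_k(e), and ∫_E v · grad q dx = 0 for every q ∈ P_{k-1}(E) with zero mean, then div v = 0 in E and ∫_E v · grad φ dx = 0 for every φ ∈ H^1(E). -/
/-!
Testing the edge condition with `gN j` itself gives `∫₀¹ (gN j)² = 0`, so every normal trace
vanishes and Green's formula loses its boundary term. Testing Green's formula with `φ = div v`
and comparing with the gradient condition for the mean-free part of `div v`, which has the same
gradient, gives `∫_E (div v)² = 0`. A polynomial vanishing on the open set `interior E` is zero,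
and then Green's formula says `∫_E v·∇φ = 0`.
-/

open MvPolynomial MeasureTheory

theorem eqOn_zero_of_setIntegral_mul_self_eq_zero {X : Type*} [TopologicalSpace X]
    [MeasurableSpace X] {μ : Measure X} [μ.IsOpenPosMeasure] {f : X → ℝ} {s : Set X}
    (hf : Continuous f) (hint : IntegrableOn (fun x => f x * f x) s μ)
    (h : ∫ x in s, f x * f x ∂μ = 0) : Set.EqOn f 0 (interior s) := by
  have hae : (fun x => f x * f x) =ᵐ[μ.restrict (interior s)] 0 :=
    ae_restrict_of_ae_restrict_of_subset interior_subset
      ((integral_eq_zero_iff_of_nonneg (fun x => mul_self_nonneg (f x)) hint).1 h)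
  intro x hx
  simpa using Measure.eqOn_open_of_ae_eq hae isOpen_interior
    (hf.mul hf).continuousOn continuousOn_const hx

theorem Polynomial.eq_zero_of_intervalIntegral_mul_self_eq_zero {p : Polynomial ℝ} {a b : ℝ}
    (hab : a < b) (h : ∫ t in a..b, p.eval t * p.eval t = 0) : p = 0 := by
  rw [intervalIntegral.integral_of_le hab.le] at h
  have hroots := eqOn_zero_of_setIntegral_mul_self_eq_zero p.continuous
    (p.continuous.mul p.continuous).integrableOn_Ioc h
  rw [interior_Ioc] at hroots
  exact p.eq_zero_of_infinite_isRoot ((Set.Ioo_infinite hab).mono hroots)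

namespace MvPolynomial

section Calculus

variable {𝕜 σ : Type*} [NontriviallyNormedField 𝕜]

theorem hasLineDerivAt_eval [DecidableEq σ] (p : MvPolynomial σ 𝕜) (x : σ → 𝕜) (i : σ) :
    HasLineDerivAt 𝕜 (fun y => eval y p) (eval x (pderiv i p)) x (Pi.single i 1) := by
  unfold HasLineDerivAt
  induction p using MvPolynomial.induction_on with
  | C a => simpa using hasDerivAt_const (0 : 𝕜) a
  | add p q hp hq =>
    simp only [map_add]
    exact hp.add hq
  | mul_X p j hp =>
    have hXj : HasDerivAt (fun t : 𝕜 => (x + t • Pi.single i 1 : σ → 𝕜) j)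
        ((Pi.single i 1 : σ → 𝕜) j) 0 := by
      simpa using ((hasDerivAt_id (0 : 𝕜)).mul_const ((Pi.single i 1 : σ → 𝕜) j)).const_add (x j)
    simp only [map_mul, eval_X]
    refine (hp.mul hXj).congr_deriv ?_
    simp [pderiv_X, Pi.single_apply, apply_ite (eval x), mul_comm, add_comm]

variable [Fintype σ]

theorem contDiff_eval (p : MvPolynomial σ 𝕜) {n : WithTop ℕ∞} :
    ContDiff 𝕜 n (fun y => eval y p) := by
  induction p using MvPolynomial.induction_on with
  | C a => simpa using contDiff_const
  | add p q hp hq => simpa using hp.add hq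
  | mul_X p j hp => simpa using hp.mul (contDiff_apply 𝕜 𝕜 j)

theorem fderiv_eval_single [DecidableEq σ] (p : MvPolynomial σ 𝕜) (x : σ → 𝕜) (i : σ) :
    fderiv 𝕜 (fun y => eval y p) x (Pi.single i 1) = eval x (pderiv i p) := by
  rw [← ((contDiff_eval p (n := 1)).differentiable one_ne_zero x).lineDeriv_eq_fderiv,
    (hasLineDerivAt_eval p x i).lineDeriv]

theorem eq_zero_of_forall_eval_eq_zero_of_isOpen {p : MvPolynomial σ 𝕜} {U : Set (σ → 𝕜)}
    (hU : IsOpen U) (hne : U.Nonempty) (h : ∀ x ∈ U, eval x p = 0) : p = 0 := by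
  obtain ⟨x, hx⟩ := hne
  obtain ⟨r, hr, hball⟩ := Metric.isOpen_iff.1 hU x hx
  refine funext_set (fun i => Metric.ball (x i) r)
    (fun i => infinite_of_mem_nhds (x i) (Metric.ball_mem_nhds _ hr)) fun y hy => ?_
  rw [map_zero]
  exact h y (hball (by rwa [ball_pi x hr]))

end Calculus

theorem eq_zero_of_setIntegral_eval_mul_self_eq_zero {σ : Type*} [Fintype σ]
    {p : MvPolynomial σ ℝ} {s : Set (σ → ℝ)} (hs : Bornology.IsBounded s)
    (hs' : (interior s).Nonempty) (h : ∫ x in s, eval x p * eval x p = 0) : p = 0 := by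
  have hcont : Continuous fun x : σ → ℝ => eval x p := continuous_eval p
  have hint : IntegrableOn (fun x => eval x p * eval x p) s :=
    ((hcont.mul hcont).continuousOn.integrableOn_compact hs.isCompact_closure).mono_set
      subset_closure
  exact eq_zero_of_forall_eval_eq_zero_of_isOpen isOpen_interior hs'
    (eqOn_zero_of_setIntegral_mul_self_eq_zero hcont hint h)

end MvPolynomial

theorem exists_degLE_setIntegral_eq_zero_pderiv_eq {n : ℤ} {p : MvPolynomial (Fin 2) ℝ}
    (hp : degLE n p) {s : Set (Fin 2 → ℝ)} (hs : volume s ≠ ⊤) :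
    ∃ q, degLE n q ∧ ∫ x in s, eval x q = 0 ∧ ∀ i, pderiv i q = pderiv i p := by
  by_cases hn : 0 ≤ n
  · refine ⟨p - C (⨍ x in s, eval x p), ?_, ?_, fun i => by simp⟩
    · rw [degLE, if_pos hn] at hp ⊢
      exact (totalDegree_sub_C_le p _).trans hp
    · simpa using setAverage_sub_setAverage hs fun x => eval x p
  · rw [degLE, if_neg hn] at hp
    exact ⟨p, by rwa [degLE, if_neg hn], by simp [hp], fun i => rfl⟩

theorem div_zero_and_orthogonal_to_gradients_general
    (k m : ℕ) (V : Fin (m + 3) → (Fin 2 → ℝ)) (E : Set (Fin 2 → ℝ))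
    (hEb : Bornology.IsBounded E) (hEi : (interior E).Nonempty)
    (v : (Fin 2 → ℝ) → (Fin 2 → ℝ))
    (dv : MvPolynomial (Fin 2) ℝ) (hdv : degLE ((k : ℤ) - 1) dv)
    (gN : Fin (m + 3) → Polynomial ℝ) (hgN : ∀ j, (gN j).natDegree ≤ k)
    -- Green's formula defining `dv = div v` and the normal traces `gN j = v·n` on the edges
    (hGreen : ∀ φ : (Fin 2 → ℝ) → ℝ, ContDiff ℝ 1 φ →
      (∫ x in E, ∑ i, v x i * fderiv ℝ φ x (Pi.single i 1)) =
        -(∫ x in E, eval x dv * φ x) +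
          ∑ j, (∫ t in (0 : ℝ)..1,
              Polynomial.eval t (gN j) * φ (V j + t • (V (j + 1) - V j))) *
            Real.sqrt ((V (j + 1) 0 - V j 0) ^ 2 + (V (j + 1) 1 - V j 1) ^ 2))
    -- the moments of `v·n` of degree up to `k` vanish on every edge
    (hEdge : ∀ j, ∀ p : Polynomial ℝ, p.natDegree ≤ k →
      (∫ t in (0 : ℝ)..1, Polynomial.eval t (gN j) * Polynomial.eval t p) = 0)
    -- `∫_E v·∇q = 0` for every `q ∈ P_{k-1}(E)` with zero mean on `E`
    (hGradMom : ∀ q : MvPolynomial (Fin 2) ℝ, degLE ((k : ℤ) - 1) q →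
      (∫ x in E, eval x q) = 0 →
      (∫ x in E, ∑ i, v x i * eval x (pderiv i q)) = 0) :
    dv = 0 ∧
    ∀ φ : (Fin 2 → ℝ) → ℝ, ContDiff ℝ 1 φ →
      (∫ x in E, ∑ i, v x i * fderiv ℝ φ x (Pi.single i 1)) = 0 := by
  have hgN0 : ∀ j, gN j = 0 := fun j =>
    Polynomial.eq_zero_of_intervalIntegral_mul_self_eq_zero zero_lt_one (hEdge j _ (hgN j))
  have hGreen₀ : ∀ φ : (Fin 2 → ℝ) → ℝ, ContDiff ℝ 1 φ →
      (∫ x in E, ∑ i, v x i * fderiv ℝ φ x (Pi.single i 1)) = -∫ x in E, eval x dv * φ x := by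
    intro φ hφ
    simpa [hgN0] using hGreen φ hφ
  have hdv0 : dv = 0 := by
    refine eq_zero_of_setIntegral_eval_mul_self_eq_zero hEb hEi ?_
    obtain ⟨q, hq, hq0, hpderiv⟩ :=
      exists_degLE_setIntegral_eq_zero_pderiv_eq hdv hEb.measure_lt_top.ne
    have hself := hGreen₀ _ (contDiff_eval dv)
    simp only [fderiv_eval_single, ← hpderiv, hGradMom q hq hq0] at hself
    linarith
  refine ⟨hdv0, fun φ hφ => ?_⟩
  simpa [hdv0] using hGreen₀ φ hφ

/-- If `v` is a vector field on a simply connected bounded polygon `E` with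
`div v ∈ P_{k-1}(E)`, whose normal trace on each edge `e` is a polynomial `g_j` of degree
`≤ k` (encoded, as usual for `H(div)` fields, through the Green formula
`∫_E v·∇φ = −∫_E (div v) φ + ∫_{∂E} (v·n) φ`), such that `∫_e (v·n) p_k ds = 0` for every
edge `e` and every `p_k ∈ P_k(e)`, and `∫_E v·∇q = 0` for every `q ∈ P_{k-1}(E)` with zero
mean, then `div v = 0` in `E` and `∫_E v·∇φ = 0` for every test function `φ`. -/
theorem div_zero_and_orthogonal_to_gradients
    (k m : ℕ) (V : Fin (m + 3) → (Fin 2 → ℝ)) (E : Set (Fin 2 → ℝ))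
    (hEm : MeasurableSet E) (hEb : Bornology.IsBounded E) (hEi : (interior E).Nonempty)
    (hfr : frontier E = ⋃ j, segment ℝ (V j) (V (j + 1)))
    (v : (Fin 2 → ℝ) → (Fin 2 → ℝ)) (hv : ContinuousOn v (closure E))
    (dv : MvPolynomial (Fin 2) ℝ) (hdv : degLE ((k : ℤ) - 1) dv)
    (gN : Fin (m + 3) → Polynomial ℝ) (hgN : ∀ j, (gN j).natDegree ≤ k)
    -- Green's formula defining `dv = div v` and the normal traces `gN j = v·n` on the edges
    (hGreen : ∀ φ : (Fin 2 → ℝ) → ℝ, ContDiff ℝ 1 φ →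
      (∫ x in E, ∑ i, v x i * fderiv ℝ φ x (Pi.single i 1)) =
        -(∫ x in E, eval x dv * φ x) +
          ∑ j, (∫ t in (0 : ℝ)..1,
              Polynomial.eval t (gN j) * φ (V j + t • (V (j + 1) - V j))) *
            Real.sqrt ((V (j + 1) 0 - V j 0) ^ 2 + (V (j + 1) 1 - V j 1) ^ 2))
    -- the moments of `v·n` of degree up to `k` vanish on every edge
    (hEdge : ∀ j, ∀ p : Polynomial ℝ, p.natDegree ≤ k →
      (∫ t in (0 : ℝ)..1, Polynomial.eval t (gN j) * Polynomial.eval t p) = 0)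
    -- `∫_E v·∇q = 0` for every `q ∈ P_{k-1}(E)` with zero mean on `E`
    (hGradMom : ∀ q : MvPolynomial (Fin 2) ℝ, degLE ((k : ℤ) - 1) q →
      (∫ x in E, eval x q) = 0 →
      (∫ x in E, ∑ i, v x i * eval x (pderiv i q)) = 0) :
    dv = 0 ∧
    ∀ φ : (Fin 2 → ℝ) → ℝ, ContDiff ℝ 1 φ →
      (∫ x in E, ∑ i, v x i * fderiv ℝ φ x (Pi.single i 1)) = 0 :=
  div_zero_and_orthogonal_to_gradients_general k m V E hEb hEi v dv hdv gN hgN hGreen hEdge hGradMom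
end
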